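/- arXiv:1608.02706 — 5 statements merged into one kernel-verified Lean document; each statement's English description precedes it below -/
import Mathlib

section
/- Define the upper game-theoretic expectation of F : Ω → [0,∞] by Ē(F) := inf { c ≥ 0 : F ∈ cl(C_c) }, where cl(C_c) is the smallest liminf-closed class containing C_c. Assume the family (C_c)_{c≥0} is nested (c ≤ c' implies C_c ⊆ C_{c'}). Then Ē satisfies the Fatou property: for any sequence of functions Fₙ : Ω → [0,∞], Ē(liminf_{n→∞} Fₙ) ≤ liminf_{n→∞} Ē(Fₙ). -/
set_option autoImplicit false

open Filter

/-- Liminf-closedness of a class of `[0,∞]`-valued functionals. -/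
def LiminfClosed {Ω : Type*} (C : Set (Ω → ENNReal)) : Prop :=
  ∀ F : Ω → ENNReal,
    (∃ Fn : ℕ → Ω → ENNReal, (∀ n, Fn n ∈ C) ∧
      ∀ ω, F ω ≤ Filter.liminf (fun n => Fn n ω) Filter.atTop) → F ∈ C

/-- The smallest liminf-closed class containing `C`. -/
def liminfClosure {Ω : Type*} (C : Set (Ω → ENNReal)) : Set (Ω → ENNReal) :=
  ⋂₀ {D : Set (Ω → ENNReal) | LiminfClosed D ∧ C ⊆ D}

/-- The upper game-theoretic expectation associated with a family of classes `(C_c)_{c ≥ 0}`: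
`Ē(F) = inf { c ≥ 0 : F ∈ cl(C_c) }`. -/
noncomputable def upperGameExp {Ω : Type*} (Cc : NNReal → Set (Ω → ENNReal))
    (F : Ω → ENNReal) : ENNReal :=
  ⨅ c ∈ {c : NNReal | F ∈ liminfClosure (Cc c)}, (c : ENNReal)

/-! If `Ē(Fₙ) < c` for infinitely many `n`, then by monotonicity of the family these `Fₙ` all lie
in `cl(C_c)`, and since `cl(C_c)` is liminf-closed it contains the liminf along that subsequence,
which dominates `liminf Fₙ`. Hence `Ē(liminf Fₙ) ≤ c` for every `c > liminf Ē(Fₙ)`. -/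

section LiminfClosure

variable {Ω : Type*}

lemma liminfClosed_liminfClosure (C : Set (Ω → ENNReal)) : LiminfClosed (liminfClosure C) := by
  rintro F ⟨Fn, hFn, hle⟩ D hD
  exact hD.1 F ⟨Fn, fun n => hFn n D hD, hle⟩

lemma liminfClosure_mono {C C' : Set (Ω → ENNReal)} (h : C ⊆ C') :
    liminfClosure C ⊆ liminfClosure C' :=
  fun _ hF D hD => hF D ⟨hD.1, h.trans hD.2⟩

lemma liminf_le_liminf_comp_of_strictMono {β : Type*} [CompleteLattice β] (u : ℕ → β) {φ : ℕ → ℕ} (hφ : StrictMono φ) :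
    liminf u atTop ≤ liminf (u ∘ φ) atTop := by
  rw [liminf_comp]
  exact liminf_le_liminf_of_le hφ.tendsto_atTop

lemma LiminfClosed.liminf_mem_of_frequently {C : Set (Ω → ENNReal)} (hC : LiminfClosed C)
    {Fn : ℕ → Ω → ENNReal} (hfreq : ∃ᶠ n in atTop, Fn n ∈ C) :
    (fun ω => liminf (fun n => Fn n ω) atTop) ∈ C := by
  obtain ⟨φ, hφ, hmem⟩ := extraction_of_frequently_atTop hfreq
  exact hC _ ⟨fun k => Fn (φ k), hmem,
    fun ω => liminf_le_liminf_comp_of_strictMono (fun n => Fn n ω) hφ⟩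

end LiminfClosure

section UpperGameExp

variable {Ω : Type*} {Cc : NNReal → Set (Ω → ENNReal)} {F : Ω → ENNReal}

lemma upperGameExp_le_of_mem_liminfClosure {c : NNReal} (h : F ∈ liminfClosure (Cc c)) :
    upperGameExp Cc F ≤ c :=
  iInf₂_le c h

lemma mem_liminfClosure_of_upperGameExp_lt (hmono : Monotone Cc)
    {c : NNReal} (h : upperGameExp Cc F < c) : F ∈ liminfClosure (Cc c) := by
  obtain ⟨c', hc', hlt⟩ : ∃ c' : NNReal, F ∈ liminfClosure (Cc c') ∧ (c' : ENNReal) < c := by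
    simpa only [upperGameExp, iInf_lt_iff, Set.mem_ofPred_eq, exists_prop] using h
  exact liminfClosure_mono (hmono (ENNReal.coe_lt_coe.mp hlt).le) hc'

end UpperGameExp

/-- Fatou property of the upper game-theoretic expectation: for a nested family `(C_c)`,
`Ē(liminf Fₙ) ≤ liminf Ē(Fₙ)`. -/
theorem upperGameExp_liminf_le {Ω : Type*} (Cc : NNReal → Set (Ω → ENNReal))
    (hmono : ∀ c c' : NNReal, c ≤ c' → Cc c ⊆ Cc c')
    (Fn : ℕ → Ω → ENNReal) :
    upperGameExp Cc (fun ω => Filter.liminf (fun n => Fn n ω) Filter.atTop)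
      ≤ Filter.liminf (fun n => upperGameExp Cc (Fn n)) Filter.atTop := by
  refine le_of_forall_gt_imp_ge_of_dense fun a ha => ?_
  obtain ⟨c, hLc, hca⟩ := ENNReal.lt_iff_exists_nnreal_btwn.mp ha
  have hfreq : ∃ᶠ n in atTop, Fn n ∈ liminfClosure (Cc c) :=
    (frequently_lt_of_liminf_lt (by isBoundedDefault) hLc).mono
      fun n hn => mem_liminfClosure_of_upperGameExp_lt hmono hn
  calc upperGameExp Cc (fun ω => liminf (fun n => Fn n ω) atTop)
      ≤ c := upperGameExp_le_of_mem_liminfClosure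
        ((liminfClosed_liminfClosure _).liminf_mem_of_frequently hfreq)
    _ ≤ a := hca.le
end

section
/- Let Ω'' be the family of all subsets of [0,1] × [0,∞) of the form A ∪ ({1} × [0,∞)) where A ⊆ [0,1] × [0,∞) is bounded and closed, equipped with the Hausdorff metric (defined via the ℓ∞ norm on ℝ²). Let Ω' ⊆ Ω'' consist of those sets whose vertical cut at each t ∈ [0,1) is a nonempty closed interval and whose cut at 0 contains the point 1. Then Ω' is closed in Ω''. -/
set_option autoImplicit false

open Set

/-- The vertical cut of a subset of the plane at abscissa `t`. -/
def verticalCut (S : Set (ℝ × ℝ)) (t : ℝ) : Set ℝ := {a : ℝ | (t, a) ∈ S}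

/-- Membership in `Ω''`: sets of the form `A ∪ ({1} × [0,∞))` with
`A ⊆ [0,1] × [0,∞)` bounded and closed. -/
def MemOmegaPP (S : Set (ℝ × ℝ)) : Prop :=
  ∃ A : Set (ℝ × ℝ), IsClosed A ∧ Bornology.IsBounded A ∧
    A ⊆ Icc (0 : ℝ) 1 ×ˢ Ici (0 : ℝ) ∧ S = A ∪ ({(1 : ℝ)} ×ˢ Ici (0 : ℝ))

/-- Membership in `Ω'`: members of `Ω''` all of whose vertical cuts at `t ∈ [0,1)` are
nonempty closed intervals, and whose cut at `0` contains `1`. -/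
def MemOmegaP (S : Set (ℝ × ℝ)) : Prop :=
  MemOmegaPP S ∧
    (∀ t ∈ Ico (0 : ℝ) 1, ∃ a b : ℝ, a ≤ b ∧ verticalCut S t = Icc a b) ∧
    (1 : ℝ) ∈ verticalCut S 0

/-!
Points of the `Aₙ` accumulate only at points of the closed set `B`. Hence `(0, 1) ∈ B`, and every
`t ∈ [0, 1)` lies in the closure of the first projection of `B`, which is closed because `B` is a
compact set plus a vertical ray; so the cut of `B` at `t` is nonempty, and it is compact. For its
convexity, given `(t, y₁), (t, y₂) ∈ B` and `y₁ < c < y₂`, approximate these points by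
`p, q ∈ Aₙ`. The cuts of `Aₙ` over the segment between `p.1` and `q.1` are intervals and `Aₙ` is
compact over it, so by connectedness of the segment `Aₙ` contains a point `(v, c)` with `v` in the
segment, hence close to `(t, c)`.
-/

open Filter Topology Metric

theorem mem_closure_of_tendsto_hausdorffEDist {ι α : Type*} [PseudoMetricSpace α]
    {l : Filter ι} {A : ι → Set α} {B : Set α} {x : α}
    (hAB : Tendsto (fun i => hausdorffEDist (A i) B) l (𝓝 0))
    (hx : ∀ ε > 0, ∃ᶠ i in l, ∃ y ∈ A i, dist x y < ε) : x ∈ closure B := by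
  refine Metric.mem_closure_iff.2 fun ε hε => ?_
  obtain ⟨i, ⟨y, hyA, hxy⟩, hi⟩ := ((hx _ (half_pos hε)).and_eventually
    (hAB.eventually_lt_const (ENNReal.ofReal_pos.2 (half_pos hε)))).exists
  obtain ⟨b, hbB, hyb⟩ := exists_edist_lt_of_hausdorffEDist_lt hyA hi
  exact ⟨b, hbB, (dist_triangle x y b).trans_lt (by linarith [edist_lt_ofReal.1 hyb])⟩

theorem ordConnected_image_snd_of_isPreconnected {X Y : Type*} [TopologicalSpace X]
    [T2Space X] [LinearOrder Y] [TopologicalSpace Y] [OrderClosedTopology Y]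
    {S : Set (X × Y)} {K : Set X} (hK : IsPreconnected K)
    (hSK : IsCompact (S ∩ Prod.fst ⁻¹' K))
    (hne : ∀ x ∈ K, (Prod.mk x ⁻¹' S).Nonempty)
    (hconn : ∀ x ∈ K, (Prod.mk x ⁻¹' S).OrdConnected) :
    (Prod.snd '' (S ∩ Prod.fst ⁻¹' K)).OrdConnected := by
  refine ⟨?_⟩
  rintro _ ⟨⟨x₁, y₁⟩, ⟨h₁S, h₁K⟩, rfl⟩ _ ⟨⟨x₂, y₂⟩, ⟨h₂S, h₂K⟩, rfl⟩ c hc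
  -- `K` is covered by the closed sets of abscissae over which `S` reaches below, resp. above,
  -- `c`; they meet, and over a common point the fibre is an interval straddling `c`.
  set below := Prod.fst '' (S ∩ Prod.fst ⁻¹' K ∩ Prod.snd ⁻¹' Iic c)
  set above := Prod.fst '' (S ∩ Prod.fst ⁻¹' K ∩ Prod.snd ⁻¹' Ici c)
  have hbelow : IsClosed below :=
    ((hSK.inter_right (isClosed_Iic.preimage continuous_snd)).image continuous_fst).isClosed
  have habove : IsClosed above :=
    ((hSK.inter_right (isClosed_Ici.preimage continuous_snd)).image continuous_fst).isClosed
  have hcover : K ⊆ below ∪ above := by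
    intro x hx
    obtain ⟨y, hy⟩ := hne x hx
    rcases le_total y c with hyc | hcy
    · exact Or.inl ⟨(x, y), ⟨⟨hy, hx⟩, hyc⟩, rfl⟩
    · exact Or.inr ⟨(x, y), ⟨⟨hy, hx⟩, hcy⟩, rfl⟩
  obtain ⟨-, hxK, ⟨⟨x, a⟩, ⟨⟨haS, -⟩, hac⟩, rfl⟩, ⟨⟨x', b⟩, ⟨⟨hbS, -⟩, hcb⟩, hx'⟩⟩ :=
    isPreconnected_closed_iff.1 hK below above hbelow habove hcover
      ⟨x₁, h₁K, (x₁, y₁), ⟨⟨h₁S, h₁K⟩, hc.1⟩, rfl⟩ ⟨x₂, h₂K, (x₂, y₂), ⟨⟨h₂S, h₂K⟩, hc.2⟩, rfl⟩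
  obtain rfl : x' = x := hx'
  exact ⟨(x', c), ⟨(hconn x' hxK).out haS hbS ⟨hac, hcb⟩, hxK⟩, rfl⟩

theorem Set.Nonempty.exists_eq_Icc_of_isCompact_of_ordConnected {s : Set ℝ} (hne : s.Nonempty)
    (hc : IsCompact s) (ho : s.OrdConnected) : ∃ a b : ℝ, a ≤ b ∧ s = Icc a b :=
  have h := eq_Icc_of_connected_compact ⟨hne, ho.isPreconnected⟩ hc
  ⟨_, _, nonempty_Icc.1 (h ▸ hne), h⟩

theorem verticalCut_eq_image_snd (S : Set (ℝ × ℝ)) (t : ℝ) :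
    verticalCut S t = Prod.snd '' (S ∩ Prod.fst ⁻¹' {t}) := by
  ext a
  simp [verticalCut]

namespace MemOmegaPP

variable {S : Set (ℝ × ℝ)}

theorem isClosed (h : MemOmegaPP S) : IsClosed S := by
  obtain ⟨A, hAc, -, -, rfl⟩ := h
  exact hAc.union (isClosed_singleton.prod isClosed_Ici)

theorem subset_Icc_prod_Ici (h : MemOmegaPP S) : S ⊆ Icc (0 : ℝ) 1 ×ˢ Ici (0 : ℝ) := by
  obtain ⟨A, -, -, hAsub, rfl⟩ := h
  exact union_subset hAsub (prod_mono (by simp) subset_rfl)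

theorem isCompact_inter_preimage_fst (h : MemOmegaPP S) {K : Set ℝ} (hK : IsClosed K)
    (hK1 : K ⊆ Iio 1) : IsCompact (S ∩ Prod.fst ⁻¹' K) := by
  obtain ⟨A, hAc, hAb, -, rfl⟩ := h
  have hray : {(1 : ℝ)} ×ˢ Ici (0 : ℝ) ∩ Prod.fst ⁻¹' K = ∅ := by
    ext ⟨x, y⟩
    simp only [mem_inter_iff, mem_prod, mem_singleton_iff, mem_preimage, mem_empty_iff_false,
      iff_false, not_and]
    rintro ⟨rfl, -⟩
    exact fun h1 => lt_irrefl (1 : ℝ) (hK1 h1)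
  rw [union_inter_distrib_right, hray, union_empty]
  exact (isCompact_of_isClosed_isBounded hAc hAb).inter_right (hK.preimage continuous_fst)

theorem isCompact_verticalCut (h : MemOmegaPP S) {t : ℝ} (ht : t < 1) :
    IsCompact (verticalCut S t) := by
  rw [verticalCut_eq_image_snd]
  exact (h.isCompact_inter_preimage_fst isClosed_singleton (by simpa using ht)).image
    continuous_snd

theorem isClosed_image_fst (h : MemOmegaPP S) : IsClosed (Prod.fst '' S) := by
  obtain ⟨A, hAc, hAb, -, rfl⟩ := h
  rw [image_union, fst_image_prod _ nonempty_Ici]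
  exact ((isCompact_of_isClosed_isBounded hAc hAb).image continuous_fst).isClosed.union
    isClosed_singleton

end MemOmegaPP

namespace MemOmegaP

variable {S : Set (ℝ × ℝ)}

theorem nonempty_verticalCut (h : MemOmegaP S) {t : ℝ} (ht : t ∈ Ico 0 1) :
    (verticalCut S t).Nonempty := by
  obtain ⟨a, b, hab, hcut⟩ := h.2.1 t ht
  exact hcut ▸ nonempty_Icc.2 hab

theorem ordConnected_verticalCut (h : MemOmegaP S) {t : ℝ} (ht : t ∈ Ico 0 1) :
    (verticalCut S t).OrdConnected := by
  obtain ⟨a, b, -, hcut⟩ := h.2.1 t ht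
  exact hcut ▸ ordConnected_Icc

theorem exists_mem_uIcc_of_le_of_le (h : MemOmegaP S) {p q : ℝ × ℝ} (hp : p ∈ S) (hq : q ∈ S)
    (hp1 : p.1 < 1) (hq1 : q.1 < 1) {c : ℝ} (hpc : p.2 ≤ c) (hcq : c ≤ q.2) :
    ∃ v ∈ uIcc p.1 q.1, (v, c) ∈ S := by
  have hK : uIcc p.1 q.1 ⊆ Ico 0 1 := ordConnected_Ico.uIcc_subset
    ⟨(h.1.subset_Icc_prod_Ici hp).1.1, hp1⟩ ⟨(h.1.subset_Icc_prod_Ici hq).1.1, hq1⟩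
  obtain ⟨⟨v, c⟩, ⟨hvS, hvK⟩, rfl⟩ := (ordConnected_image_snd_of_isPreconnected isPreconnected_uIcc
    (h.1.isCompact_inter_preimage_fst isClosed_Icc (hK.trans Ico_subset_Iio_self))
    (fun x hx => h.nonempty_verticalCut (hK hx))
    (fun x hx => h.ordConnected_verticalCut (hK hx))).out
    ⟨p, ⟨hp, left_mem_uIcc⟩, rfl⟩ ⟨q, ⟨hq, right_mem_uIcc⟩, rfl⟩ ⟨hpc, hcq⟩
  exact ⟨v, hvK, hvS⟩

end MemOmegaP

section HausdorffLimit

variable {A : ℕ → Set (ℝ × ℝ)} {B : Set (ℝ × ℝ)}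

theorem nonempty_verticalCut_of_tendsto (hA : ∀ n, MemOmegaP (A n)) (hB : MemOmegaPP B)
    (hconv : Tendsto (fun n => hausdorffEDist (A n) B) atTop (𝓝 0)) {t : ℝ}
    (ht : t ∈ Ico 0 1) : (verticalCut B t).Nonempty := by
  have ht' : t ∈ closure (Prod.fst '' B) := Metric.mem_closure_iff.2 fun ε hε => by
    obtain ⟨n, hn⟩ := (hconv.eventually_lt_const (ENNReal.ofReal_pos.2 hε)).exists
    obtain ⟨a, ha⟩ := (hA n).nonempty_verticalCut ht
    obtain ⟨w, hwB, hw⟩ := exists_edist_lt_of_hausdorffEDist_lt (show (t, a) ∈ A n from ha) hn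
    rw [edist_lt_ofReal, Prod.dist_eq] at hw
    exact ⟨w.1, mem_image_of_mem _ hwB, (le_max_left _ _).trans_lt hw⟩
  obtain ⟨⟨t, a⟩, haB, rfl⟩ := hB.isClosed_image_fst.closure_eq ▸ ht'
  exact ⟨a, haB⟩

theorem ordConnected_verticalCut_of_tendsto (hA : ∀ n, MemOmegaP (A n)) (hB : IsClosed B)
    (hconv : Tendsto (fun n => hausdorffEDist (A n) B) atTop (𝓝 0)) {t : ℝ} (ht : t < 1) :
    (verticalCut B t).OrdConnected := by
  refine ⟨fun y₁ hy₁ y₂ hy₂ c hc => ?_⟩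
  rcases hc.1.eq_or_lt with rfl | h₁
  · exact hy₁
  rcases hc.2.eq_or_lt with rfl | h₂
  · exact hy₂
  show (t, c) ∈ B
  rw [← hB.closure_eq]
  refine mem_closure_of_tendsto_hausdorffEDist hconv fun ε hε => Eventually.frequently ?_
  set δ := min ε (min (1 - t) (min (c - y₁) (y₂ - c)))
  have hδ : 0 < δ := lt_min hε (lt_min (by linarith) (lt_min (by linarith) (by linarith)))
  have hδt : δ ≤ 1 - t := (min_le_right _ _).trans (min_le_left _ _)
  have hδ₁ : δ ≤ c - y₁ := (min_le_right _ _).trans ((min_le_right _ _).trans (min_le_left _ _))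
  have hδ₂ : δ ≤ y₂ - c := (min_le_right _ _).trans ((min_le_right _ _).trans (min_le_right _ _))
  filter_upwards [hconv.eventually_lt_const (ENNReal.ofReal_pos.2 hδ)] with n hn
  obtain ⟨p, hpA, hp⟩ := exists_edist_lt_of_hausdorffEDist_lt (show (t, y₁) ∈ B from hy₁)
    (hausdorffEDist_comm.trans_lt hn)
  obtain ⟨q, hqA, hq⟩ := exists_edist_lt_of_hausdorffEDist_lt (show (t, y₂) ∈ B from hy₂)
    (hausdorffEDist_comm.trans_lt hn)
  rw [edist_lt_ofReal, Prod.dist_eq, max_lt_iff, dist_comm, dist_comm y₁] at hp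
  rw [edist_lt_ofReal, Prod.dist_eq, max_lt_iff, dist_comm, dist_comm y₂] at hq
  obtain ⟨hp₁, hp₂⟩ := hp
  obtain ⟨hq₁, hq₂⟩ := hq
  rw [← mem_ball, Real.ball_eq_Ioo] at hp₁ hq₁ hp₂ hq₂
  dsimp only at hp₁ hq₁
  obtain ⟨v, hv, hvA⟩ := (hA n).exists_mem_uIcc_of_le_of_le (c := c) hpA hqA
    (by linarith [hp₁.2]) (by linarith [hq₁.2]) (by linarith [hp₂.2]) (by linarith [hq₂.1])
  refine ⟨(v, c), hvA, ?_⟩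
  calc dist (t, c) (v, c) = dist v t := by simp [Prod.dist_eq, dist_comm]
    _ < δ := by rw [← mem_ball, Real.ball_eq_Ioo]; exact ordConnected_Ioo.uIcc_subset hp₁ hq₁ hv
    _ ≤ ε := min_le_left _ _

end HausdorffLimit

/-- `Ω'` is closed in `Ω''` with respect to the Hausdorff metric (the metric on `ℝ × ℝ` is
the `ℓ∞` product metric): if `Aₙ ∈ Ω'` converge in Hausdorff distance to `B ∈ Ω''`,
then `B ∈ Ω'`. -/
theorem omegaP_closed (A : ℕ → Set (ℝ × ℝ)) (B : Set (ℝ × ℝ))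
    (hA : ∀ n, MemOmegaP (A n)) (hB : MemOmegaPP B)
    (hconv : Filter.Tendsto (fun n => EMetric.hausdorffEdist (A n) B)
      Filter.atTop (nhds 0)) :
    MemOmegaP B := by
  refine ⟨hB, fun t ht => ?_, ?_⟩
  · exact (nonempty_verticalCut_of_tendsto hA hB hconv ht)
      |>.exists_eq_Icc_of_isCompact_of_ordConnected (hB.isCompact_verticalCut ht.2)
        (ordConnected_verticalCut_of_tendsto hA hB.isClosed hconv ht.2)
  · show ((0 : ℝ), (1 : ℝ)) ∈ B
    rw [← hB.isClosed.closure_eq]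
    exact mem_closure_of_tendsto_hausdorffEDist hconv fun ε hε =>
      Frequently.of_forall fun n => ⟨_, (hA n).2.2, by simpa using hε⟩
end

section
/- Let A ∈ Ω' (i.e., A = B ∪ ({1} × [0,∞)) with B ⊆ [0,1] × [0,∞) bounded closed, each vertical cut A^t for t ∈ [0,1) a nonempty closed interval, and (0,1) ∈ A). Then for every ε > 0 there exists a continuous function ω : [0,1] → [0,∞) with ω(0) = 1 such that every point (t, ω(t)) of its graph is within ℓ∞-distance ε of some point of A. -/
set_option autoImplicit false

open Set

/-!
Choose nodes `c i` on the cuts of `S` above `t = i/n`, with `c 0 = 1`, and let `ω` be the broken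
line through the points `(i/n, c i)`. Over `[i/n, (i+1)/n]` with `(i+1)/n < 1` the part of `S` is
compact and fibres over an interval with interval fibres, hence connected; its projection to the
second coordinate is then an interval containing `c i` and `c (i+1)`, so it contains `ω t`. Thus
`(s, ω t) ∈ S` for some `s` within `1/n` of `t`. The last piece, ending at `t = 1`, is handled by
the ray `{1} × [0,∞)`.
-/

open Topology

theorem IsCompact.isConnected_of_isConnected_image_of_fibres {X Y : Type*} [TopologicalSpace X]
    [TopologicalSpace Y] [T2Space Y] {K : Set X} {f : X → Y} (hK : IsCompact K)
    (hf : ContinuousOn f K) (himage : IsConnected (f '' K))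
    (hfibres : ∀ y ∈ f '' K, IsConnected (K ∩ f ⁻¹' {y})) : IsConnected K := by
  have : CompactSpace K := isCompact_iff_compactSpace.mp hK
  have : ConnectedSpace (f '' K) := Subtype.connectedSpace himage
  set g : K → f '' K := K.imageFactorization f
  have hg : Continuous g := hf.domRestrict.subtype_mk _
  have hquot : IsQuotientMap g :=
    (hg.isClosedMap).isQuotientMap hg imageFactorization_surjective
  have hval : ∀ s : Set K, IsConnected (Subtype.val '' s) ↔ IsConnected s := fun s => by
    simp only [IsConnected, image_nonempty, IsInducing.subtypeVal.isPreconnected_image]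
  have huniv : IsConnected (g ⁻¹' univ) := by
    refine hquot.isCoinducing.isConnected_preimage_of_isClosed (fun y => ?_) isClosed_univ
      isConnected_univ
    rw [← hval]
    convert hfibres y y.2 using 1
    ext x
    simp [g, Set.imageFactorization, Subtype.ext_iff, and_comm]
  rwa [← hval, preimage_univ, image_univ, Subtype.range_coe] at huniv

/-- The broken line through the points `(i, c i)`, `i ≤ n`, written as a sum of clamped ramps
so that continuity is immediate. -/
def piecewiseLinear (c : ℕ → ℝ) (n : ℕ) (x : ℝ) : ℝ :=
  c 0 + ∑ i ∈ Finset.range n, (c (i + 1) - c i) * max 0 (min 1 (x - i))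

section piecewiseLinear

variable (c : ℕ → ℝ) (n : ℕ)

theorem continuous_piecewiseLinear : Continuous (piecewiseLinear c n) := by
  unfold piecewiseLinear; fun_prop

theorem piecewiseLinear_zero : piecewiseLinear c n 0 = c 0 := by
  simp [piecewiseLinear]

variable {c n}

theorem piecewiseLinear_eq {i : ℕ} (hi : i < n) {x : ℝ} (hx : x ∈ Icc (i : ℝ) (i + 1)) :
    piecewiseLinear c n x = c i + (x - i) * (c (i + 1) - c i) := by
  have hbefore : ∀ j ∈ Finset.range i,
      (c (j + 1) - c j) * max 0 (min 1 (x - j)) = c (j + 1) - c j := by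
    intro j hj
    have : (j : ℝ) + 1 ≤ i := by exact_mod_cast Finset.mem_range.mp hj
    rw [min_eq_left (by linarith [hx.1]), max_eq_right zero_le_one, mul_one]
  have hafter : ∀ j ∈ Finset.Ico (i + 1) n, (c (j + 1) - c j) * max 0 (min 1 (x - j)) = 0 := by
    intro j hj
    have : (i : ℝ) + 1 ≤ j := by exact_mod_cast (Finset.mem_Ico.mp hj).1
    rw [min_eq_right (by linarith [hx.2]), max_eq_left (by linarith [hx.2]), mul_zero]
  rw [piecewiseLinear, ← Finset.sum_range_add_sum_Ico _ hi, Finset.sum_range_succ,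
    Finset.sum_congr rfl hbefore, Finset.sum_eq_zero hafter, Finset.sum_range_sub,
    min_eq_right (by linarith [hx.2]), max_eq_right (by linarith [hx.1])]
  ring

theorem piecewiseLinear_mem_uIcc {i : ℕ} (hi : i < n) {x : ℝ} (hx : x ∈ Icc (i : ℝ) (i + 1)) :
    piecewiseLinear c n x ∈ uIcc (c i) (c (i + 1)) := by
  rw [piecewiseLinear_eq hi hx]
  have h0 : 0 ≤ x - i := by linarith [hx.1]
  have h1 : x - i ≤ 1 := by linarith [hx.2]
  rcases le_total (c i) (c (i + 1)) with h | h
  · rw [uIcc_of_le h]; constructor <;> nlinarith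
  · rw [uIcc_of_ge h]; constructor <;> nlinarith

end piecewiseLinear

theorem exists_lt_mem_Icc_add_one {n : ℕ} (hn : 0 < n) {x : ℝ} (hx : x ∈ Icc 0 (n : ℝ)) :
    ∃ i < n, x ∈ Icc (i : ℝ) (i + 1) := by
  rcases hx.2.lt_or_eq with hlt | rfl
  · exact ⟨⌊x⌋₊, by exact_mod_cast (Nat.floor_lt hx.1).mpr hlt, Nat.floor_le hx.1,
      (Nat.lt_floor_add_one x).le⟩
  · exact ⟨n - 1, Nat.sub_lt hn one_pos, by simp [Nat.cast_pred hn]⟩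

namespace MemOmegaPP

variable {S : Set (ℝ × ℝ)}

theorem snd_nonneg (hS : MemOmegaPP S) {p : ℝ × ℝ} (hp : p ∈ S) : 0 ≤ p.2 := by
  obtain ⟨A, -, -, hA, rfl⟩ := hS
  rcases hp with hp | hp
  exacts [(hA hp).2, hp.2]

theorem mk_one_mem (hS : MemOmegaPP S) {y : ℝ} (hy : 0 ≤ y) : ((1 : ℝ), y) ∈ S := by
  obtain ⟨A, -, -, -, rfl⟩ := hS
  exact Or.inr ⟨rfl, hy⟩

theorem isCompact_inter_fst_preimage (hS : MemOmegaPP S) {T : Set ℝ} (hT : IsClosed T)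
    (hT1 : (1 : ℝ) ∉ T) : IsCompact (S ∩ Prod.fst ⁻¹' T) := by
  obtain ⟨A, hAclosed, hAbdd, -, rfl⟩ := hS
  have hSclosed : IsClosed (A ∪ {(1 : ℝ)} ×ˢ Ici (0 : ℝ)) :=
    hAclosed.union (isClosed_singleton.prod isClosed_Ici)
  refine (hAbdd.isCompact_closure.of_isClosed_subset
    (hSclosed.inter (hT.preimage continuous_fst)) ?_)
  rintro p ⟨hp | hp, hpT⟩
  · exact subset_closure hp
  · exact absurd (hp.1 ▸ hpT) hT1

end MemOmegaPP

namespace MemOmegaP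

variable {S : Set (ℝ × ℝ)}

theorem exists_mem (hS : MemOmegaP S) {t : ℝ} (ht : t ∈ Icc (0 : ℝ) 1) : ∃ y, (t, y) ∈ S := by
  rcases ht.2.lt_or_eq with hlt | rfl
  · obtain ⟨a, b, hab, hcut⟩ := hS.2.1 t ⟨ht.1, hlt⟩
    exact ⟨a, show a ∈ verticalCut S t by rw [hcut]; exact left_mem_Icc.mpr hab⟩
  · exact ⟨0, hS.1.mk_one_mem le_rfl⟩

theorem isConnected_inter_fst_preimage_Icc (hS : MemOmegaP S) {t t' : ℝ} (ht : 0 ≤ t)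
    (htt' : t ≤ t') (ht' : t' < 1) : IsConnected (S ∩ Prod.fst ⁻¹' Icc t t') := by
  have hcut : ∀ s ∈ Icc t t', ∃ a b, a ≤ b ∧ verticalCut S s = Icc a b := fun s hs =>
    hS.2.1 s ⟨ht.trans hs.1, hs.2.trans_lt ht'⟩
  have himage : Prod.fst '' (S ∩ Prod.fst ⁻¹' Icc t t') = Icc t t' := by
    refine Subset.antisymm (image_subset_iff.mpr inter_subset_right) fun s hs => ?_
    obtain ⟨y, hy⟩ := hS.exists_mem ⟨ht.trans hs.1, hs.2.trans ht'.le⟩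
    exact ⟨(s, y), ⟨hy, hs⟩, rfl⟩
  refine (hS.1.isCompact_inter_fst_preimage isClosed_Icc fun h => ht'.not_ge h.2)
    |>.isConnected_of_isConnected_image_of_fibres continuous_fst.continuousOn ?_ ?_
  · rw [himage]; exact isConnected_Icc htt'
  · rw [himage]
    intro s hs
    obtain ⟨a, b, hab, hcut⟩ := hcut s hs
    have hfibre : S ∩ Prod.fst ⁻¹' Icc t t' ∩ Prod.fst ⁻¹' {s} = Prod.mk s '' Icc a b := by
      ext ⟨x, y⟩
      constructor
      · rintro ⟨⟨hxy, -⟩, rfl⟩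
        exact ⟨y, hcut ▸ hxy, rfl⟩
      · rintro ⟨z, hz, hzxy⟩
        obtain ⟨rfl, rfl⟩ := Prod.mk.inj hzxy
        exact ⟨⟨show z ∈ verticalCut S s from hcut ▸ hz, hs⟩, rfl⟩
    rw [hfibre]
    exact (isConnected_Icc hab).image _ (continuous_const.prodMk continuous_id).continuousOn

theorem exists_mem_Icc_of_mem_uIcc (hS : MemOmegaP S) {t t' c c' v : ℝ} (ht : 0 ≤ t)
    (htt' : t ≤ t') (ht' : t' ≤ 1) (hc : (t, c) ∈ S) (hc' : (t', c') ∈ S)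
    (hv : v ∈ uIcc c c') : ∃ s ∈ Icc t t', (s, v) ∈ S := by
  rcases ht'.lt_or_eq with ht'1 | rfl
  · have hsnd := (hS.isConnected_inter_fst_preimage_Icc ht htt' ht'1).image Prod.snd
      continuous_snd.continuousOn
    obtain ⟨p, ⟨hpS, hps⟩, rfl⟩ := hsnd.isPreconnected.ordConnected.uIcc_subset
      ⟨(t, c), ⟨hc, left_mem_Icc.mpr htt'⟩, rfl⟩ ⟨(t', c'), ⟨hc', right_mem_Icc.mpr htt'⟩, rfl⟩ hv
    exact ⟨p.1, hps, hpS⟩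
  · exact ⟨1, right_mem_Icc.mpr htt', hS.1.mk_one_mem
      ((le_min (hS.1.snd_nonneg hc) (hS.1.snd_nonneg hc')).trans hv.1)⟩

theorem exists_nodes (hS : MemOmegaP S) (n : ℕ) :
    ∃ c : ℕ → ℝ, c 0 = 1 ∧ ∀ i ≤ n, ((i : ℝ) / n, c i) ∈ S := by
  have hnode : ∀ i : ℕ, ∃ y : ℝ, (i = 0 → y = 1) ∧ (i ≤ n → ((i : ℝ) / n, y) ∈ S) := by
    rintro (_ | i)
    · exact ⟨1, fun _ => rfl, fun _ => by simpa [verticalCut] using hS.2.2⟩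
    · by_cases hi : i + 1 ≤ n
      · obtain ⟨y, hy⟩ := hS.exists_mem (t := ((i + 1 : ℕ) : ℝ) / n)
          ⟨by positivity, div_le_one_of_le₀ (by exact_mod_cast hi) n.cast_nonneg⟩
        exact ⟨y, fun h => absurd h i.succ_ne_zero, fun _ => hy⟩
      · exact ⟨0, fun h => absurd h i.succ_ne_zero, fun h => absurd h hi⟩
  choose c hc0 hc using hnode
  exact ⟨c, hc0 0 rfl, hc⟩

theorem exists_mem_dist_le_piecewiseLinear (hS : MemOmegaP S) {n : ℕ} (hn : 0 < n)
    {c : ℕ → ℝ} (hc : ∀ i ≤ n, ((i : ℝ) / n, c i) ∈ S) {t : ℝ} (ht : t ∈ Icc (0 : ℝ) 1) :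
    ∃ s, dist t s ≤ 1 / n ∧ (s, piecewiseLinear c n (n * t)) ∈ S := by
  have hnR : (0 : ℝ) < n := by exact_mod_cast hn
  obtain ⟨i, hi, hti⟩ := exists_lt_mem_Icc_add_one hn (x := n * t)
    ⟨by nlinarith [ht.1], by nlinarith [ht.2]⟩
  have htI : t ∈ Icc ((i : ℝ) / n) ((i + 1) / n) :=
    ⟨by rw [div_le_iff₀ hnR]; linarith [hti.1], by rw [le_div_iff₀ hnR]; linarith [hti.2]⟩
  obtain ⟨s, hs, hsS⟩ := hS.exists_mem_Icc_of_mem_uIcc (t' := (i + 1) / n) (by positivity)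
    (div_le_div_of_nonneg_right (by linarith) hnR.le)
    (by rw [div_le_one hnR]; exact_mod_cast hi)
    (hc i hi.le) (by exact_mod_cast hc (i + 1) hi) (piecewiseLinear_mem_uIcc hi hti)
  exact ⟨s, (Real.dist_le_of_mem_Icc htI hs).trans_eq (by ring), hsS⟩

end MemOmegaP

/-- For every `A ∈ Ω'` and `ε > 0` there is a positive continuous path `ω` on `[0,1]` with
`ω(0) = 1` each point of whose graph is within `ℓ∞`-distance `ε` of a point of `A`
(the metric on `ℝ × ℝ` being the `ℓ∞` product metric). -/
theorem omegaP_neighbourhood_nonempty (S : Set (ℝ × ℝ)) (hS : MemOmegaP S)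
    (ε : ℝ) (hε : 0 < ε) :
    ∃ ω : ℝ → ℝ, ContinuousOn ω (Icc (0 : ℝ) 1) ∧ ω 0 = 1 ∧
      (∀ t ∈ Icc (0 : ℝ) 1, 0 ≤ ω t) ∧
      ∀ t ∈ Icc (0 : ℝ) 1, ∃ p ∈ S, dist ((t, ω t) : ℝ × ℝ) p < ε := by
  obtain ⟨m, hm⟩ := exists_nat_one_div_lt hε
  obtain ⟨c, hc0, hc⟩ := hS.exists_nodes (m + 1)
  have hnear := fun t (ht : t ∈ Icc (0 : ℝ) 1) =>
    hS.exists_mem_dist_le_piecewiseLinear m.succ_pos hc ht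
  refine ⟨fun t => piecewiseLinear c (m + 1) ((m + 1 : ℕ) * t), ?_, ?_, fun t ht => ?_,
    fun t ht => ?_⟩
  · exact ((continuous_piecewiseLinear c _).comp (continuous_const_mul _)).continuousOn
  · simp [piecewiseLinear_zero, hc0]
  · obtain ⟨s, -, hs⟩ := hnear t ht
    exact hS.1.snd_nonneg hs
  · obtain ⟨s, hts, hs⟩ := hnear t ht
    refine ⟨_, hs, ?_⟩
    rw [Prod.dist_eq, dist_self, max_eq_left dist_nonneg]
    exact hts.trans_lt (by exact_mod_cast hm)
end

section
/- Let ρ_H on [0,1] × [0,∞) be defined by ρ_H((v,x),(v',x')) := (|v−v'| ∨ |x−x'|) ∧ (1 − v∧v'). Then ρ_H((v,x),(v',x')) equals the Hausdorff distance (with respect to the ℓ∞ norm on ℝ²) between the sets {(v,x)} ∪ ({1} × [0,∞)) and {(v',x')} ∪ ({1} × [0,∞)). -/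
set_option autoImplicit false

open Set

/-!
Points of the common half-line `{1} × [0,∞)` lie in both sets, so only the two isolated points
contribute to the Hausdorff distance. In the `ℓ∞` metric the half-line is at distance `1 - v`
from `(v, x)`, attained at `(1, x)`; hence `(v, x)` is at distance `(|v-v'| ∨ |x-x'|) ∧ (1 - v)`
from the other set, and the larger of the two such values is the formula for `ρ_H`.
-/

namespace Metric

section PseudoEMetric

variable {α : Type*} [PseudoEMetricSpace α]

theorem hausdorffEDist_singleton_union (p q : α) (u : Set α) :
    hausdorffEDist ({p} ∪ u) ({q} ∪ u) = max (infEDist p ({q} ∪ u)) (infEDist q ({p} ∪ u)) := by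
  apply le_antisymm
  · apply hausdorffEDist_le_of_infEDist
    · rintro y (rfl | hy)
      · exact le_max_left _ _
      · exact (infEDist_zero_of_mem (mem_union_right {q} hy)).trans_le zero_le
    · rintro y (rfl | hy)
      · exact le_max_right _ _
      · exact (infEDist_zero_of_mem (mem_union_right {p} hy)).trans_le zero_le
  · refine max_le (infEDist_le_hausdorffEDist_of_mem (Or.inl rfl)) ?_
    rw [hausdorffEDist_comm]
    exact infEDist_le_hausdorffEDist_of_mem (Or.inl rfl)

end PseudoEMetric

section PseudoMetric

variable {α β : Type*} [PseudoMetricSpace α] [PseudoMetricSpace β]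

theorem hausdorffDist_singleton_union (p q : α) (u : Set α) :
    hausdorffDist ({p} ∪ u) ({q} ∪ u) = max (infDist p ({q} ∪ u)) (infDist q ({p} ∪ u)) := by
  rw [hausdorffDist, hausdorffEDist_singleton_union, ENNReal.toReal_max
    (infEDist_ne_top (singleton_nonempty q).inl) (infEDist_ne_top (singleton_nonempty p).inl)]
  rfl

theorem infDist_singleton_union (x y : α) {s : Set α} (hs : s.Nonempty) :
    infDist x ({y} ∪ s) = min (dist x y) (infDist x s) := by
  rw [infDist, infEDist_union, ENNReal.toReal_min (infEDist_ne_top (singleton_nonempty y))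
    (infEDist_ne_top hs), ← infDist, ← infDist, infDist_singleton]

theorem infDist_singleton_prod_of_mem (a c : α) {b : β} {t : Set β} (hb : b ∈ t) :
    infDist (a, b) ({c} ×ˢ t) = dist a c := by
  rw [infDist, infEDist_prod, infEDist_singleton, infEDist_zero_of_mem hb, max_eq_left zero_le,
    ← dist_edist]

end PseudoMetric

end Metric

/-- The formula `ρ_H((v,x),(v',x')) = (|v−v'| ∨ |x−x'|) ∧ (1 − v∧v')` computes the Hausdorff
distance (with respect to the `ℓ∞` norm on `ℝ²`, i.e. the product metric on `ℝ × ℝ`) between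
the sets `{(v,x)} ∪ ({1} × [0,∞))` and `{(v',x')} ∪ ({1} × [0,∞))`. -/
theorem rhoH_eq_hausdorffDist (v v' x x' : ℝ)
    (hv : v ∈ Icc (0 : ℝ) 1) (hv' : v' ∈ Icc (0 : ℝ) 1) (hx : 0 ≤ x) (hx' : 0 ≤ x') :
    Metric.hausdorffDist
      (({(v, x)} : Set (ℝ × ℝ)) ∪ {(1 : ℝ)} ×ˢ Ici (0 : ℝ))
      (({(v', x')} : Set (ℝ × ℝ)) ∪ {(1 : ℝ)} ×ˢ Ici (0 : ℝ))
      = min (max |v - v'| |x - x'|) (1 - min v v') := by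
  have hL : ({(1 : ℝ)} ×ˢ Ici (0 : ℝ)).Nonempty := ⟨(1, 0), rfl, self_mem_Ici⟩
  rw [Metric.hausdorffDist_singleton_union, Metric.infDist_singleton_union _ _ hL,
    Metric.infDist_singleton_union _ _ hL,
    Metric.infDist_singleton_prod_of_mem _ _ (mem_Ici.2 hx),
    Metric.infDist_singleton_prod_of_mem _ _ (mem_Ici.2 hx'), dist_comm (v', x'),
    ← min_max_distrib_left]
  simp only [Prod.dist_eq, Real.dist_eq, abs_of_nonpos (sub_nonpos.2 hv.2),
    abs_of_nonpos (sub_nonpos.2 hv'.2), neg_sub, max_sub_sub_left]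
end

section
/- Let ω, ω₁, ω₂, … ∈ C([0,2], [0,∞)) with ωₙ(0) = ω(0) = 1, and suppose ωₙ → ω in the Hausdorff metric on C⁺₁[0,2] (Hausdorff distance, ℓ∞ in ℝ², between graphs extended by the ray {2}×[0,∞)). Then ωₙ|_{[0,1]} → ω|_{[0,1]} uniformly on [0,1]. -/
/-!
A point `(t, ωₙ t)` with `t ≤ 1` lies within `δ < 1` of the extended graph of `ω` once the
Hausdorff distance is below `δ`; it is then at distance `≥ 1` from the ray, so it is `δ`-close to
some `(s, ω s)`. Hence `|t - s| < δ` and `|ωₙ t - ω s| < δ`, and uniform continuity of `ω` on the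
compact `[0,2]` turns this into `|ωₙ t - ω t| < ε`.
-/

set_option autoImplicit false

open Set Filter

theorem tendstoUniformlyOn_of_forall_exists_graphOn_dist_lt
    {α β ι : Type*} [PseudoMetricSpace α] [PseudoMetricSpace β] {l : Filter ι}
    {F : ι → α → β} {g : α → β} {s u : Set α} (hg : UniformContinuousOn g s) (hus : u ⊆ s)
    (h : ∀ δ > 0, ∀ᶠ n in l, ∀ t ∈ u, ∃ p ∈ s.graphOn g, dist (t, F n t) p < δ) :
    TendstoUniformlyOn F g l u := by
  rw [Metric.tendstoUniformlyOn_iff]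
  intro ε hε
  obtain ⟨δ, hδ, hgδ⟩ := Metric.uniformContinuousOn_iff.1 hg (ε / 2) (half_pos hε)
  filter_upwards [h (min δ (ε / 2)) (lt_min hδ (half_pos hε))] with n hn t ht
  obtain ⟨_, ⟨t', ht', rfl⟩, hdist⟩ := hn t ht
  rw [Prod.dist_eq, max_lt_iff, lt_min_iff, lt_min_iff] at hdist
  obtain ⟨⟨htt', -⟩, -, hFg⟩ := hdist
  calc dist (g t) (F n t) ≤ dist (g t) (g t') + dist (F n t) (g t') := dist_triangle_right _ _ _
    _ < ε / 2 + ε / 2 := add_lt_add (hgδ t (hus ht) t' ht' htt') hFg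
    _ = ε := add_halves ε

theorem one_le_dist_of_fst_eq_two {t b : ℝ} (ht : t ≤ 1) {p : ℝ × ℝ} (hp : p.1 = 2) :
    1 ≤ dist (t, b) p := by
  rw [Prod.dist_eq, hp, Real.dist_eq, abs_of_nonpos (by linarith)]
  exact le_max_of_le_left (by linarith)

theorem uniform_convergence_of_hausdorff_convergence_general
    (ωn : ℕ → ℝ → ℝ) (ω : ℝ → ℝ)
    (hc : ContinuousOn ω (Icc (0 : ℝ) 2))
    (hconv : Tendsto (fun n =>
        EMetric.hausdorffEdist
          ((fun t => ((t, ωn n t) : ℝ × ℝ)) '' Icc (0 : ℝ) 2 ∪ {(2 : ℝ)} ×ˢ Ici (0 : ℝ))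
          ((fun t => ((t, ω t) : ℝ × ℝ)) '' Icc (0 : ℝ) 2 ∪ {(2 : ℝ)} ×ˢ Ici (0 : ℝ)))
      atTop (nhds 0)) :
    TendstoUniformlyOn (fun n t => ωn n t) ω atTop (Icc (0 : ℝ) 1) := by
  refine tendstoUniformlyOn_of_forall_exists_graphOn_dist_lt
    (isCompact_Icc.uniformContinuousOn_of_continuous hc) (Icc_subset_Icc_right one_le_two)
    fun δ hδ => ?_
  have hδ' : (0 : ENNReal) < ENNReal.ofReal (min δ 1) := ENNReal.ofReal_pos.2 (lt_min hδ one_pos)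
  filter_upwards [hconv.eventually (gt_mem_nhds hδ')] with n hn t ht
  have ht2 : t ∈ Icc (0 : ℝ) 2 := ⟨ht.1, ht.2.trans one_le_two⟩
  obtain ⟨p, hp | hp, hdist⟩ :=
    Metric.exists_edist_lt_of_hausdorffEDist_lt (mem_union_left _ (mem_image_of_mem _ ht2)) hn
  all_goals rw [edist_lt_ofReal, lt_min_iff] at hdist
  · exact ⟨p, hp, hdist.1⟩
  · exact absurd hdist.2 (one_le_dist_of_fst_eq_two ht.2 hp.1).not_gt

/-- If positive continuous paths `ωₙ` on `[0,2]` with `ωₙ(0) = 1` converge to `ω` in the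
Hausdorff metric (graphs extended by the ray `{2} × [0,∞)`, `ℓ∞` norm on `ℝ²`), then
`ωₙ|[0,1] → ω|[0,1]` uniformly. -/
theorem uniform_convergence_of_hausdorff_convergence
    (ωn : ℕ → ℝ → ℝ) (ω : ℝ → ℝ)
    (hcn : ∀ n, ContinuousOn (ωn n) (Icc (0 : ℝ) 2)) (hc : ContinuousOn ω (Icc (0 : ℝ) 2))
    (h0n : ∀ n, ωn n 0 = 1) (h0 : ω 0 = 1)
    (hposn : ∀ n, ∀ t ∈ Icc (0 : ℝ) 2, 0 ≤ ωn n t)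
    (hpos : ∀ t ∈ Icc (0 : ℝ) 2, 0 ≤ ω t)
    (hconv : Tendsto (fun n =>
        EMetric.hausdorffEdist
          ((fun t => ((t, ωn n t) : ℝ × ℝ)) '' Icc (0 : ℝ) 2 ∪ {(2 : ℝ)} ×ˢ Ici (0 : ℝ))
          ((fun t => ((t, ω t) : ℝ × ℝ)) '' Icc (0 : ℝ) 2 ∪ {(2 : ℝ)} ×ˢ Ici (0 : ℝ)))
      atTop (nhds 0)) :
    TendstoUniformlyOn (fun n t => ωn n t) ω atTop (Icc (0 : ℝ) 1) :=
  uniform_convergence_of_hausdorff_convergence_general ωn ω hc hconv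
end
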